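/- arXiv:1412.3284 — 2 statements merged into one kernel-verified Lean document; each statement's English description precedes it below -/
import Mathlib

section
/- Let A be a compact metric space, f = Σ_m c_m δ_{ξ_m} a finite signed measure supported on a finite set Ξ = {ξ_m} ⊂ A with real coefficients c_m, and Π a finite-dimensional space of continuous real functions on A spanned by P_1, ..., P_D. Suppose that for every choice of signs u_m ∈ {-1, +1} there exists q ∈ Π with q(ξ_m) = u_m for all ξ_m ∈ Ξ and |q(ξ)| < 1 for all ξ ∈ A \ Ξ. Then f is the unique signed Borel measure g on A minimizing ‖g‖_TV subject to the constraints ∫ P_k dg = ∫ P_k df for all k = 1, ..., D. -/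
open MeasureTheory

/-- Integration of a function against a signed measure, via its Jordan decomposition. -/
noncomputable def signedIntegral {A : Type*} [MeasurableSpace A]
    (g : SignedMeasure A) (P : A → ℝ) : ℝ :=
  (∫ x, P x ∂g.toJordanDecomposition.posPart) - ∫ x, P x ∂g.toJordanDecomposition.negPart

/-- The total variation norm of a signed measure. -/
noncomputable def tvNorm {A : Type*} [MeasurableSpace A] (g : SignedMeasure A) : ℝ :=
  (g.totalVariation Set.univ).toReal

/-!
Take the certificate `q` interpolating the signs of the `c m`. As `|q| ≤ 1`,
`∫ q dg ≤ ‖g‖_TV` for every `g`, while `∫ q df = ∑ |c m| = ‖f‖_TV`; the moment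
constraints give `∫ q dg = ∫ q df`, so `‖f‖_TV ≤ ‖g‖_TV`. In case of equality,
`∫ (1 - q) dg⁺ + ∫ (1 + q) dg⁻ = 0`, and as `|q| < 1` off `Ξ` both Jordan parts of `g`
are carried by `Ξ`: `g = ∑ d m δ_{ξ m}`. Testing the moments against the certificate of
each sign pattern `u` gives `∑ (d m - c m) u m = 0`, and the pattern `u = sign (d - c)`
forces `d = c`.
-/

open Set

theorem exists_sign_mul_eq_abs {ι : Type*} (v : ι → ℝ) :
    ∃ u : ι → ℝ, (∀ m, u m = 1 ∨ u m = -1) ∧ ∀ m, v m * u m = |v m| := by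
  refine ⟨fun m => if 0 ≤ v m then 1 else -1, fun m => by dsimp only; split_ifs <;> simp,
    fun m => ?_⟩
  dsimp only
  split_ifs with hm
  · rw [mul_one, abs_of_nonneg hm]
  · rw [mul_neg_one, abs_of_neg (not_le.1 hm)]

theorem eq_of_forall_sign_sum_mul_eq {ι : Type*} [Fintype ι] {d c : ι → ℝ}
    (h : ∀ u : ι → ℝ, (∀ m, u m = 1 ∨ u m = -1) →
      ∑ m, d m * u m = ∑ m, c m * u m) :
    d = c := by
  obtain ⟨u, hu, h_abs⟩ := exists_sign_mul_eq_abs (d - c)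
  have h_zero : ∑ m, |(d - c) m| = 0 :=
    calc ∑ m, |(d - c) m| = ∑ m, (d m * u m - c m * u m) :=
          Finset.sum_congr rfl fun m _ => by rw [← h_abs, Pi.sub_apply, sub_mul]
      _ = 0 := by rw [Finset.sum_sub_distrib, h u hu, sub_self]
  funext m
  rw [← sub_eq_zero, ← abs_eq_zero, ← Pi.sub_apply]
  exact (Finset.sum_eq_zero_iff_of_nonneg fun m _ => abs_nonneg _).1 h_zero m (Finset.mem_univ m)

theorem abs_le_one_of_eq_sign_of_abs_lt_one {A ι : Type*} {ξ : ι → A} {q : A → ℝ}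
    {u : ι → ℝ} (hu : ∀ m, u m = 1 ∨ u m = -1) (hq : ∀ m, q (ξ m) = u m)
    (hq_lt : ∀ x ∉ range ξ, |q x| < 1) (x : A) : |q x| ≤ 1 := by
  by_cases hx : x ∈ range ξ
  · obtain ⟨m, rfl⟩ := hx
    rcases hu m with h | h <;> simp [hq, h]
  · exact (hq_lt x hx).le

theorem Continuous.integrable_of_compactSpace {X : Type*} [TopologicalSpace X] [CompactSpace X]
    [MeasurableSpace X] [OpensMeasurableSpace X] {μ : Measure X} [IsFiniteMeasure μ]
    {f : X → ℝ} (hf : Continuous f) : Integrable f μ :=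
  hf.integrable_of_hasCompactSupport (HasCompactSupport.of_compactSpace f)

namespace MeasureTheory

theorem integral_eq_sum_of_measure_compl_range_eq_zero {A ι : Type*} [MeasurableSpace A]
    [MeasurableSingletonClass A] [Fintype ι] {μ : Measure A} [IsFiniteMeasure μ] {ξ : ι → A}
    (hξ : Function.Injective ξ) (hμ : μ (range ξ)ᶜ = 0) (h : A → ℝ) :
    ∫ x, h x ∂μ = ∑ m, μ.real {ξ m} * h (ξ m) := by
  classical
  have h_range : ↑(Finset.univ.image ξ) = range ξ := by simp
  have h_finset := setIntegral_finset (μ := μ) (f := h) (Finset.univ.image ξ) IntegrableOn.finset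
  rw [h_range, Measure.restrict_eq_self_of_ae_mem (s := range ξ) (mem_ae_iff.2 hμ),
    Finset.sum_image hξ.injOn] at h_finset
  exact h_finset

theorem measure_compl_eq_zero_of_integral_eq_zero {A : Type*} [MeasurableSpace A]
    {μ : Measure A} {φ : A → ℝ} {T : Set A} (hφ : 0 ≤ φ) (hφi : Integrable φ μ)
    (h_zero : ∫ x, φ x ∂μ = 0) (hT : ∀ x ∉ T, φ x ≠ 0) : μ Tᶜ = 0 :=
  measure_mono_null hT (ae_iff.1 ((integral_eq_zero_iff_of_nonneg hφ hφi).1 h_zero))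

theorem Measure.MutuallySingular.measure_singleton_eq_zero_or {A : Type*} [MeasurableSpace A]
    [MeasurableSingletonClass A] {μ ν : Measure A} (h : μ ⟂ₘ ν) (x : A) :
    μ {x} = 0 ∨ ν {x} = 0 := by
  by_cases hx : x ∈ h.nullSet
  · exact .inl (measure_mono_null (singleton_subset_iff.2 hx) h.measure_nullSet)
  · exact .inr (measure_mono_null (singleton_subset_iff.2 hx) h.measure_compl_nullSet)

namespace SignedMeasure

variable {A : Type*} [MeasurableSpace A] (s : SignedMeasure A)

theorem totalVariation_eq_zero_iff {T : Set A} :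
    s.totalVariation T = 0 ↔
      s.toJordanDecomposition.posPart T = 0 ∧ s.toJordanDecomposition.negPart T = 0 := by
  rw [totalVariation, Measure.add_apply, add_eq_zero]

theorem totalVariation_eq_zero_of_forall_subset {T : Set A} (hT : MeasurableSet T)
    (h : ∀ E, MeasurableSet E → E ⊆ T → s E = 0) : s.totalVariation T = 0 := by
  obtain ⟨i, hi, hpos, hneg, hpos_eq, hneg_eq⟩ := s.toJordanDecomposition_spec
  rw [totalVariation_eq_zero_iff, hpos_eq, hneg_eq, toMeasureOfZeroLE_apply _ _ _ hT,
    toMeasureOfLEZero_apply _ _ _ hT]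
  simp [h _ (hi.inter hT) inter_subset_right, h _ (hi.compl.inter hT) inter_subset_right]

theorem tvNorm_eq_posPart_add_negPart : tvNorm s =
    s.toJordanDecomposition.posPart.real univ + s.toJordanDecomposition.negPart.real univ := by
  rw [tvNorm, totalVariation, Measure.add_apply, measureReal_def, measureReal_def,
    ENNReal.toReal_add (measure_ne_top _ _) (measure_ne_top _ _)]

section FiniteSupport

variable [MeasurableSingletonClass A] {ι : Type*} [Fintype ι] {ξ : ι → A}

theorem signedIntegral_eq_sum_of_totalVariation_compl_range_eq_zero
    (hξ : Function.Injective ξ) (hs : s.totalVariation (range ξ)ᶜ = 0) (h : A → ℝ) :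
    signedIntegral s h = ∑ m, s {ξ m} * h (ξ m) := by
  rw [totalVariation_eq_zero_iff] at hs
  simp only [signedIntegral, integral_eq_sum_of_measure_compl_range_eq_zero hξ hs.1,
    integral_eq_sum_of_measure_compl_range_eq_zero hξ hs.2, ← Finset.sum_sub_distrib,
    ← sub_mul,
    s.apply_eq_posPart_real_sub_negPart_real (measurableSet_singleton _)]

theorem apply_eq_sum_of_totalVariation_compl_range_eq_zero
    (hξ : Function.Injective ξ) (hs : s.totalVariation (range ξ)ᶜ = 0) {E : Set A}
    (hE : MeasurableSet E) : s E = ∑ m, s {ξ m} * E.indicator 1 (ξ m) := by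
  rw [← s.signedIntegral_eq_sum_of_totalVariation_compl_range_eq_zero hξ hs, signedIntegral,
    integral_indicator_one hE, integral_indicator_one hE,
    s.apply_eq_posPart_real_sub_negPart_real hE]

theorem tvNorm_eq_sum_of_totalVariation_compl_range_eq_zero
    (hξ : Function.Injective ξ) (hs : s.totalVariation (range ξ)ᶜ = 0) :
    tvNorm s = ∑ m, |s {ξ m}| := by
  rw [totalVariation_eq_zero_iff] at hs
  have hpos := integral_eq_sum_of_measure_compl_range_eq_zero hξ hs.1 1
  have hneg := integral_eq_sum_of_measure_compl_range_eq_zero hξ hs.2 1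
  simp only [Pi.one_apply, integral_const, smul_eq_mul, mul_one] at hpos hneg
  rw [tvNorm_eq_posPart_add_negPart, hpos, hneg, ← Finset.sum_add_distrib]
  refine Finset.sum_congr rfl fun m _ => ?_
  rw [s.apply_eq_posPart_real_sub_negPart_real (measurableSet_singleton _)]
  rcases s.toJordanDecomposition.mutuallySingular.measure_singleton_eq_zero_or (ξ m) with h | h <;>
    simp [measureReal_def, h]

theorem eq_of_totalVariation_compl_range_eq_zero {t : SignedMeasure A}
    (hξ : Function.Injective ξ) (hs : s.totalVariation (range ξ)ᶜ = 0)
    (ht : t.totalVariation (range ξ)ᶜ = 0) (hst : ∀ m, s {ξ m} = t {ξ m}) : s = t := by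
  ext E hE
  rw [s.apply_eq_sum_of_totalVariation_compl_range_eq_zero hξ hs hE,
    t.apply_eq_sum_of_totalVariation_compl_range_eq_zero hξ ht hE]
  simp only [hst]

end FiniteSupport

section CompactSpace

variable [TopologicalSpace A] [CompactSpace A] [OpensMeasurableSpace A] {h : A → ℝ}

theorem signedIntegral_fintype_sum_mul {κ : Type*} [Fintype κ] (a : κ → ℝ)
    {P : κ → A → ℝ} (hP : ∀ k, Continuous (P k)) :
    signedIntegral s (fun x => ∑ k, a k * P k x) = ∑ k, a k * signedIntegral s (P k) := by
  simp only [signedIntegral, mul_sub, Finset.sum_sub_distrib, ← integral_const_mul]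
  rw [integral_finsetSum _ fun k _ => ((hP k).integrable_of_compactSpace).const_mul (a k),
    integral_finsetSum _ fun k _ => ((hP k).integrable_of_compactSpace).const_mul (a k)]

theorem tvNorm_sub_signedIntegral (hh : Continuous h) :
    tvNorm s - signedIntegral s h =
      (∫ x, (1 - h x) ∂s.toJordanDecomposition.posPart) +
        ∫ x, (1 + h x) ∂s.toJordanDecomposition.negPart := by
  rw [integral_sub (integrable_const 1) hh.integrable_of_compactSpace,
    integral_add (integrable_const 1) hh.integrable_of_compactSpace, integral_const,
    integral_const, tvNorm_eq_posPart_add_negPart, signedIntegral]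
  simp only [smul_eq_mul, mul_one]
  ring

theorem signedIntegral_le_tvNorm (hh : Continuous h) (h_le : ∀ x, |h x| ≤ 1) :
    signedIntegral s h ≤ tvNorm s := by
  have hpos : 0 ≤ fun x => 1 - h x := fun x => sub_nonneg.2 (abs_le.1 (h_le x)).2
  have hneg : 0 ≤ fun x => 1 + h x := fun x => neg_le_iff_add_nonneg'.1 (abs_le.1 (h_le x)).1
  linarith [s.tvNorm_sub_signedIntegral hh,
    integral_nonneg (μ := s.toJordanDecomposition.posPart) hpos,
    integral_nonneg (μ := s.toJordanDecomposition.negPart) hneg]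

theorem totalVariation_compl_eq_zero_of_signedIntegral_eq_tvNorm {T : Set A}
    (hh : Continuous h) (h_le : ∀ x, |h x| ≤ 1) (h_lt : ∀ x ∉ T, |h x| < 1)
    (h_eq : signedIntegral s h = tvNorm s) : s.totalVariation Tᶜ = 0 := by
  have hpos : 0 ≤ fun x => 1 - h x := fun x => sub_nonneg.2 (abs_le.1 (h_le x)).2
  have hneg : 0 ≤ fun x => 1 + h x := fun x => neg_le_iff_add_nonneg'.1 (abs_le.1 (h_le x)).1
  have h_sum := s.tvNorm_sub_signedIntegral hh
  rw [h_eq, sub_self, eq_comm,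
    add_eq_zero_iff_of_nonneg (integral_nonneg hpos) (integral_nonneg hneg)] at h_sum
  rw [totalVariation_eq_zero_iff]
  exact ⟨measure_compl_eq_zero_of_integral_eq_zero hpos
      ((continuous_const.sub hh).integrable_of_compactSpace) h_sum.1
      fun x hx => (sub_pos.2 (abs_lt.1 (h_lt x hx)).2).ne',
    measure_compl_eq_zero_of_integral_eq_zero hneg
      ((continuous_const.add hh).integrable_of_compactSpace) h_sum.2
      fun x hx => (neg_lt_iff_pos_add'.1 (abs_lt.1 (h_lt x hx)).1).ne'⟩

end CompactSpace

end SignedMeasure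

section DiracCombination

variable {A : Type*} [MeasurableSpace A] {ι : Type*} [Fintype ι] (c : ι → ℝ) (ξ : ι → A)

theorem sum_smul_dirac_toSignedMeasure_apply {E : Set A} (hE : MeasurableSet E) :
    (∑ m, c m • (Measure.dirac (ξ m)).toSignedMeasure : SignedMeasure A) E =
      ∑ m, c m * E.indicator 1 (ξ m) := by
  simp only [sum_apply, smul_apply, Measure.toSignedMeasure_apply_measurable hE, measureReal_def,
    Measure.dirac_apply' _ hE, smul_eq_mul]
  refine Finset.sum_congr rfl fun m _ => ?_
  by_cases hm : ξ m ∈ E <;> simp [hm]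

theorem totalVariation_sum_smul_dirac_toSignedMeasure_compl_range [MeasurableSingletonClass A] :
    (∑ m, c m • (Measure.dirac (ξ m)).toSignedMeasure : SignedMeasure A).totalVariation
      (range ξ)ᶜ = 0 := by
  refine SignedMeasure.totalVariation_eq_zero_of_forall_subset _
    (finite_range ξ).measurableSet.compl fun E hE hE_sub => ?_
  rw [sum_smul_dirac_toSignedMeasure_apply c ξ hE]
  exact Finset.sum_eq_zero fun m _ => by
    rw [indicator_of_notMem (fun hm => hE_sub hm (mem_range_self m)), mul_zero]

theorem sum_smul_dirac_toSignedMeasure_apply_singleton [MeasurableSingletonClass A]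
    (hξ : Function.Injective ξ) (m : ι) :
    (∑ m, c m • (Measure.dirac (ξ m)).toSignedMeasure : SignedMeasure A) {ξ m} = c m := by
  classical
  rw [sum_smul_dirac_toSignedMeasure_apply c ξ (measurableSet_singleton _)]
  simp [indicator_apply, hξ.eq_iff]

end DiracCombination

end MeasureTheory

open MeasureTheory.SignedMeasure in
theorem dual_certificate_implies_unique_recovery
    {A : Type*} [MetricSpace A] [CompactSpace A] [MeasurableSpace A] [BorelSpace A]
    {ι : Type*} [Fintype ι] (c : ι → ℝ) (ξ : ι → A) (hinj : Function.Injective ξ)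
    (D : ℕ) (P : Fin D → A → ℝ) (hP : ∀ k, Continuous (P k))
    (f : SignedMeasure A)
    (hf : f = ∑ m, c m • (Measure.dirac (ξ m)).toSignedMeasure)
    (hdual : ∀ u : ι → ℝ, (∀ m, u m = 1 ∨ u m = -1) →
      ∃ a : Fin D → ℝ,
        (∀ m, (∑ k, a k * P k (ξ m)) = u m) ∧
        (∀ x : A, x ∉ Set.range ξ → |∑ k, a k * P k x| < 1)) :
    ∀ g : SignedMeasure A,
      (∀ k, signedIntegral g (P k) = signedIntegral f (P k)) →
      tvNorm f ≤ tvNorm g ∧ (tvNorm g ≤ tvNorm f → g = f) := by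
  intro g hg
  have hfS : f.totalVariation (range ξ)ᶜ = 0 :=
    hf ▸ totalVariation_sum_smul_dirac_toSignedMeasure_compl_range c ξ
  have hf_ξ : ∀ m, f {ξ m} = c m :=
    hf ▸ sum_smul_dirac_toSignedMeasure_apply_singleton c ξ hinj
  have h_moment : ∀ a : Fin D → ℝ, signedIntegral g (fun x => ∑ k, a k * P k x) =
      signedIntegral f (fun x => ∑ k, a k * P k x) := fun a => by
    simp only [signedIntegral_fintype_sum_mul _ a hP, hg]
  have h_cont : ∀ a : Fin D → ℝ, Continuous fun x => ∑ k, a k * P k x := fun a =>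
    continuous_finsetSum _ fun k _ => continuous_const.mul (hP k)
  obtain ⟨u, hu, hcu⟩ := exists_sign_mul_eq_abs c
  obtain ⟨a, ha, ha_lt⟩ := hdual u hu
  have ha_le := abs_le_one_of_eq_sign_of_abs_lt_one (q := fun x => ∑ k, a k * P k x) hu ha ha_lt
  have hf_tv : tvNorm f = signedIntegral g fun x => ∑ k, a k * P k x := by
    rw [h_moment, f.signedIntegral_eq_sum_of_totalVariation_compl_range_eq_zero hinj hfS,
      f.tvNorm_eq_sum_of_totalVariation_compl_range_eq_zero hinj hfS]
    simp only [hf_ξ, ha, hcu]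
  refine ⟨hf_tv ▸ g.signedIntegral_le_tvNorm (h_cont a) ha_le, fun hgf => ?_⟩
  have hgS : g.totalVariation (range ξ)ᶜ = 0 :=
    g.totalVariation_compl_eq_zero_of_signedIntegral_eq_tvNorm (h_cont a) ha_le ha_lt
      (le_antisymm (g.signedIntegral_le_tvNorm (h_cont a) ha_le) (hf_tv ▸ hgf))
  have hg_ξ : (fun m => g {ξ m}) = c := eq_of_forall_sign_sum_mul_eq fun v hv => by
    obtain ⟨b, hb, -⟩ := hdual v hv
    simpa [g.signedIntegral_eq_sum_of_totalVariation_compl_range_eq_zero hinj hgS,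
      f.signedIntegral_eq_sum_of_totalVariation_compl_range_eq_zero hinj hfS, hb, hf_ξ]
      using h_moment b
  exact g.eq_of_totalVariation_compl_range_eq_zero hinj hgS hfS fun m =>
    (congrFun hg_ξ m).trans (hf_ξ m).symm
end

section
/- Suppose the kernel bounds |F(x)| ≤ c/(1 + N·d(x, x_0))^k hold for a function F on S^2 for some k ≥ 3, and let Ξ ⊂ S^2 be ν/N-separated with ξ0 ∈ Ξ, and let ξ ∈ S^2 satisfy d(ξ, ξ0) ≤ ν/(2N). Then Σ_{ξ_m ∈ Ξ, ξ_m ≠ ξ0} |F(d(ξ, ξ_m))| ≤ c_k/ν^{k-1} for a constant c_k depending only on k and c. -/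
open scoped RealInnerProductSpace Classical

/-- Geodesic distance on the unit sphere `S² ⊂ ℝ³`. -/
noncomputable def geodesicDist (x y : EuclideanSpace ℝ (Fin 3)) : ℝ :=
  Real.arccos ⟪x, y⟫

/-!
The other points of `Ξ` lie at geodesic distance at least `ν / (2N)` from `ξ`, by the triangle
inequality for angles. A volume-packing argument (in the tangent plane for small caps, in a thin
spherical shell for the whole sphere) shows that a `ν/N`-separated subset of `S²` has `O(4 ^ j)`
points in the cap of radius `2 ^ j ν / N`. Summing the kernel bound over these dyadic caps leaves
`∑ⱼ 4 ^ j / (1 + 2 ^ j ν / 2) ^ k`, whose terms are dominated by the telescoping differences of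
`1 / (1 + 2 ^ j ν / 2)`; this gives `O(ν ^ (1 - k))`.
-/

open Real InnerProductGeometry Metric MeasureTheory Module Finset

theorem InnerProductGeometry.norm_sub_le_angle {V : Type*} [NormedAddCommGroup V]
    [InnerProductSpace ℝ V] {x y : V} (hx : ‖x‖ = 1) (hy : ‖y‖ = 1) : ‖x - y‖ ≤ angle x y := by
  have hcos := norm_sub_sq_eq_norm_sq_add_norm_sq_sub_two_mul_norm_mul_norm_mul_cos_angle x y
  rw [hx, hy, ← sq] at hcos
  refine (pow_le_pow_iff_left₀ (norm_nonneg _) (angle_nonneg x y) two_ne_zero).1 ?_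
  linarith [one_sub_sq_div_two_le_cos (x := angle x y)]

theorem InnerProductGeometry.two_div_pi_mul_angle_le_norm_sub {V : Type*} [NormedAddCommGroup V]
    [InnerProductSpace ℝ V] {x y : V} (hx : ‖x‖ = 1) (hy : ‖y‖ = 1) :
    2 / π * angle x y ≤ ‖x - y‖ := by
  have hcos := norm_sub_sq_eq_norm_sq_add_norm_sq_sub_two_mul_norm_mul_norm_mul_cos_angle x y
  rw [hx, hy, ← sq] at hcos
  have hθ : |angle x y| ≤ π := by rw [abs_of_nonneg (angle_nonneg x y)]; exact angle_le_pi x y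
  refine (pow_le_pow_iff_left₀ (by positivity [angle_nonneg x y]) (norm_nonneg _) two_ne_zero).1 ?_
  have : (2 / π * angle x y) ^ 2 = 2 * (2 / π ^ 2 * angle x y ^ 2) := by ring
  linarith [cos_le_one_sub_mul_cos_sq hθ]

section Geodesic

variable {x y z : EuclideanSpace ℝ (Fin 3)}

theorem geodesicDist_eq_angle (hx : ‖x‖ = 1) (hy : ‖y‖ = 1) : geodesicDist x y = angle x y := by
  simp [geodesicDist, angle, hx, hy]

theorem geodesicDist_comm (x y : EuclideanSpace ℝ (Fin 3)) :
    geodesicDist x y = geodesicDist y x := by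
  rw [geodesicDist, geodesicDist, real_inner_comm]

theorem geodesicDist_le_add (hx : ‖x‖ = 1) (hy : ‖y‖ = 1) (hz : ‖z‖ = 1) :
    geodesicDist x z ≤ geodesicDist x y + geodesicDist y z := by
  rw [geodesicDist_eq_angle hx hz, geodesicDist_eq_angle hx hy, geodesicDist_eq_angle hy hz]
  exact angle_le_angle_add_angle x y z

theorem norm_sub_le_geodesicDist (hx : ‖x‖ = 1) (hy : ‖y‖ = 1) : ‖x - y‖ ≤ geodesicDist x y :=
  geodesicDist_eq_angle hx hy ▸ norm_sub_le_angle hx hy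

theorem two_div_pi_mul_geodesicDist_le_norm_sub (hx : ‖x‖ = 1) (hy : ‖y‖ = 1) :
    2 / π * geodesicDist x y ≤ ‖x - y‖ :=
  geodesicDist_eq_angle hx hy ▸ two_div_pi_mul_angle_le_norm_sub hx hy

end Geodesic

theorem Finset.card_mul_measure_ball_le {E : Type*} [NormedAddCommGroup E] [MeasurableSpace E]
    [BorelSpace E] (μ : Measure E) [μ.IsAddHaarMeasure] {T : Finset E} {η : ℝ} {U : Set E}
    (hsep : ∀ x ∈ T, ∀ y ∈ T, x ≠ y → 2 * η ≤ ‖x - y‖) (hU : ∀ x ∈ T, ball x η ⊆ U) :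
    T.card * μ (ball 0 η) ≤ μ U := by
  have hdisj : (T : Set E).PairwiseDisjoint (ball · η) := fun x hx y hy hxy =>
    ball_disjoint_ball <| by rw [dist_eq_norm]; linarith [hsep x hx y hy hxy]
  calc T.card * μ (ball 0 η) = ∑ x ∈ T, μ (ball x η) := by
        simp [Measure.addHaar_ball_center]
    _ = μ (⋃ x ∈ T, ball x η) := (measure_biUnion_finset hdisj fun _ _ => measurableSet_ball).symm
    _ ≤ μ U := measure_mono (Set.iUnion₂_subset hU)

section Packing

variable {E : Type*} [NormedAddCommGroup E] [NormedSpace ℝ E] [FiniteDimensional ℝ E]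

theorem Finset.card_mul_pow_le_of_measure_le [MeasurableSpace E] [BorelSpace E] {T : Finset E}
    {η V : ℝ} {U : Set E} (hη : 0 < η) (hV : 0 ≤ V)
    (hsep : ∀ x ∈ T, ∀ y ∈ T, x ≠ y → 2 * η ≤ ‖x - y‖) (hU : ∀ x ∈ T, ball x η ⊆ U)
    (hUV : Measure.addHaar U ≤ ENNReal.ofReal V * Measure.addHaar (ball (0 : E) 1)) :
    T.card * η ^ finrank ℝ E ≤ V := by
  have h := (T.card_mul_measure_ball_le Measure.addHaar hsep hU).trans hUV
  rw [Measure.addHaar_ball_of_pos _ _ hη, ← mul_assoc, ENNReal.mul_le_mul_iff_left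
    (measure_ball_pos _ _ one_pos).ne' measure_ball_lt_top.ne, ← ENNReal.ofReal_natCast,
    ← ENNReal.ofReal_mul (by positivity)] at h
  exact (ENNReal.ofReal_le_ofReal_iff hV).1 h

theorem Finset.card_mul_pow_le_of_norm_sub_le {T : Finset E} {c : E} {r η : ℝ} (hη : 0 < η)
    (hr : 0 ≤ r) (hsep : ∀ x ∈ T, ∀ y ∈ T, x ≠ y → 2 * η ≤ ‖x - y‖)
    (hT : ∀ x ∈ T, ‖x - c‖ ≤ r) :
    T.card * η ^ finrank ℝ E ≤ (r + η) ^ finrank ℝ E := by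
  borelize E
  refine T.card_mul_pow_le_of_measure_le hη (by positivity) hsep (U := ball c (r + η))
    (fun x hx => ball_subset_ball' ?_) (Measure.addHaar_ball_of_pos _ _ (by positivity)).le
  rw [dist_eq_norm]; linarith [hT x hx]

theorem Finset.card_mul_pow_le_of_norm_eq_one {T : Finset E} {η : ℝ} (hη : 0 < η) (hη1 : η ≤ 1)
    (hsep : ∀ x ∈ T, ∀ y ∈ T, x ≠ y → 2 * η ≤ ‖x - y‖) (hT : ∀ x ∈ T, ‖x‖ = 1) :
    T.card * η ^ finrank ℝ E ≤ (1 + η) ^ finrank ℝ E - (1 - η) ^ finrank ℝ E := by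
  borelize E
  have hshell : ∀ x ∈ T, ball x η ⊆ ball 0 (1 + η) \ closedBall 0 (1 - η) := by
    intro x hx y hy
    rw [mem_ball, dist_eq_norm] at hy
    simp only [Set.mem_sdiff, mem_ball, mem_closedBall, dist_zero_right, not_le]
    constructor
    · linarith [norm_le_norm_add_norm_sub' y x, norm_sub_rev x y, hT x hx]
    · linarith [norm_le_norm_add_norm_sub' x y, norm_sub_rev x y, hT x hx]
  refine T.card_mul_pow_le_of_measure_le hη (sub_nonneg.2 ?_) hsep hshell (le_of_eq ?_)
  · exact pow_le_pow_left₀ (by linarith) (by linarith) _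
  have h1 : 0 ≤ 1 - η := by linarith
  rw [measure_sdiff (closedBall_subset_ball (by linarith))
      measurableSet_closedBall.nullMeasurableSet measure_closedBall_lt_top.ne,
    Measure.addHaar_ball_of_pos _ _ (by positivity), Measure.addHaar_closedBall _ _ h1,
    ← ENNReal.sub_mul (fun _ _ => measure_ball_lt_top.ne), ENNReal.ofReal_sub _ (by positivity)]

end Packing

section Cap

variable {E : Type*} [NormedAddCommGroup E] [InnerProductSpace ℝ E]

theorem abs_inner_sub_le_mul_norm_sub {p x y : E} {r : ℝ} (hp : ‖p‖ = 1) (hx : ‖x‖ = 1)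
    (hy : ‖y‖ = 1) (hxr : ‖x - p‖ ≤ r) (hyr : ‖y - p‖ ≤ r) : |⟪p, x - y⟫| ≤ r * ‖x - y‖ := by
  have hpol : 2 * ⟪p, x - y⟫ = (‖y - p‖ + ‖x - p‖) * (‖y - p‖ - ‖x - p‖) := by
    rw [← sq_sub_sq, norm_sub_sq_real, norm_sub_sq_real, inner_sub_right, real_inner_comm p x,
      real_inner_comm p y, hp, hx, hy]
    ring
  have hdiff : |‖y - p‖ - ‖x - p‖| ≤ ‖x - y‖ := by
    simpa [norm_sub_rev y x] using abs_norm_sub_norm_le (y - p) (x - p)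
  have h := congrArg abs hpol
  rw [abs_mul, abs_mul, abs_two, abs_of_nonneg (by positivity : 0 ≤ ‖y - p‖ + ‖x - p‖)] at h
  have := mul_le_mul (add_le_add hyr hxr) hdiff (abs_nonneg _) (by linarith [norm_nonneg (y - p)])
  linarith

theorem norm_sq_eq_inner_sq_add_norm_sq_projection {p : E} (hp : ‖p‖ = 1) (z : E) :
    ‖z‖ ^ 2 = ⟪p, z⟫ ^ 2 + ‖(ℝ ∙ p)ᗮ.orthogonalProjectionOnto z‖ ^ 2 := by
  rw [Submodule.norm_sq_eq_add_norm_sq_projection z (ℝ ∙ p)]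
  congr 1
  have : ‖(ℝ ∙ p).orthogonalProjectionOnto z‖ = ‖(ℝ ∙ p).starProjection z‖ := rfl
  rw [this, Submodule.starProjection_unit_singleton ℝ hp, norm_smul, hp, mul_one, norm_eq_abs,
    sq_abs]

/- Projecting onto the tangent plane `pᗮ` shrinks distances inside the cap by a factor at most
`√(1 - r ^ 2) ≥ 3 / 5`, so the cap is packed like a disc of radius `r` in dimension `n`. -/
theorem Finset.card_mul_pow_le_of_norm_sub_le_of_norm_eq_one {n : ℕ} [Fact (finrank ℝ E = n + 1)]
    {T : Finset E} {p : E} {r δ : ℝ} (hp : ‖p‖ = 1) (hδ : 0 < δ) (hr0 : 0 ≤ r) (hr : r ≤ 4 / 5)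
    (hsep : ∀ x ∈ T, ∀ y ∈ T, x ≠ y → δ ≤ ‖x - y‖) (hT1 : ∀ x ∈ T, ‖x‖ = 1)
    (hT : ∀ x ∈ T, ‖x - p‖ ≤ r) :
    T.card * (3 * δ / 10) ^ n ≤ (r + 3 * δ / 10) ^ n := by
  have : FiniteDimensional ℝ E := .of_fact_finrank_eq_succ n
  set P := (ℝ ∙ p)ᗮ.orthogonalProjectionOnto
  have hdim : finrank ℝ (ℝ ∙ p)ᗮ = n :=
    Submodule.finrank_orthogonal_span_singleton (ne_zero_of_norm_ne_zero (hp ▸ one_ne_zero))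
  have hPsep : ∀ x ∈ T, ∀ y ∈ T, x ≠ y → 2 * (3 * δ / 10) ≤ ‖P x - P y‖ := by
    intro x hx y hy hxy
    have hpyth : ‖x - y‖ ^ 2 = ⟪p, x - y⟫ ^ 2 + ‖P (x - y)‖ ^ 2 :=
      norm_sq_eq_inner_sq_add_norm_sq_projection hp (x - y)
    have hin := abs_inner_sub_le_mul_norm_sub hp (hT1 x hx) (hT1 y hy) (hT x hx) (hT y hy)
    have hsq : ⟪p, x - y⟫ ^ 2 ≤ (r * ‖x - y‖) ^ 2 := sq_le_sq' (abs_le.1 hin).1 (abs_le.1 hin).2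
    rw [← map_sub]
    refine (pow_le_pow_iff_left₀ (by positivity) (norm_nonneg _) two_ne_zero).1 ?_
    have hδxy := pow_le_pow_left₀ hδ.le (hsep x hx y hy hxy) 2
    have hr2 : r ^ 2 ≤ 16 / 25 := by nlinarith
    nlinarith [mul_le_mul_of_nonneg_right hr2 (sq_nonneg ‖x - y‖)]
  have hPinj : Set.InjOn P T := fun x hx y hy hPxy => by
    by_contra hxy
    have := hPsep x hx y hy hxy
    rw [hPxy, sub_self, norm_zero] at this
    linarith
  have hPball : ∀ z ∈ T.image P, ‖z - 0‖ ≤ r := by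
    simp only [mem_image, sub_zero, forall_exists_index, and_imp]
    rintro _ x hx rfl
    have hPp : P p = 0 :=
      Submodule.orthogonalProjectionOnto_orthogonalComplement_singleton_eq_zero p
    have hpyth : ‖x - p‖ ^ 2 = ⟪p, x - p⟫ ^ 2 + ‖P (x - p)‖ ^ 2 :=
      norm_sq_eq_inner_sq_add_norm_sq_projection hp (x - p)
    rw [map_sub, hPp, sub_zero] at hpyth
    nlinarith [hT x hx, norm_nonneg (P x), norm_nonneg (x - p)]
  have himsep : ∀ a ∈ T.image P, ∀ b ∈ T.image P, a ≠ b → 2 * (3 * δ / 10) ≤ ‖a - b‖ := by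
    simp only [forall_mem_image]
    exact fun x hx y hy hxy => hPsep x hx y hy (fun h => hxy (h ▸ rfl))
  have h := (T.image P).card_mul_pow_le_of_norm_sub_le (by positivity) hr0 himsep hPball
  rwa [card_image_of_injOn hPinj, hdim] at h

end Cap

section Sphere

local notation "E³" => EuclideanSpace ℝ (Fin 3)

/- Caps of chordal radius at most `4 / 5` are counted in the tangent plane; for larger ones the
shell bound `24 / δ ^ 2 + 2` on the whole sphere is already of order `(r / δ) ^ 2`. -/
theorem Finset.card_filter_norm_sub_le_le {T : Finset E³} {p : E³} {r δ : ℝ} (hp : ‖p‖ = 1)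
    (hδ : 0 < δ) (hδ2 : δ ≤ 2) (hr : 0 ≤ r) (hsep : ∀ x ∈ T, ∀ y ∈ T, x ≠ y → δ ≤ ‖x - y‖)
    (hT1 : ∀ x ∈ T, ‖x‖ = 1) : (#{x ∈ T | ‖x - p‖ ≤ r} : ℝ) ≤ 40 * (r / δ + 1) ^ 2 := by
  have hbound : 40 * (r / δ + 1) ^ 2 = 40 * (r + δ) ^ 2 / δ ^ 2 := by field_simp
  rw [hbound, le_div_iff₀ (by positivity)]
  rcases le_or_gt r (4 / 5) with hr45 | hr45
  · have : Fact (finrank ℝ E³ = 2 + 1) := ⟨by simp⟩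
    have hcap := card_mul_pow_le_of_norm_sub_le_of_norm_eq_one (n := 2)
      (T := {x ∈ T | ‖x - p‖ ≤ r}) hp hδ hr hr45
      (fun x hx y hy => hsep x (mem_filter.1 hx).1 y (mem_filter.1 hy).1)
      (fun x hx => hT1 x (mem_filter.1 hx).1) (fun x hx => (mem_filter.1 hx).2)
    nlinarith
  · have hsep' : ∀ x ∈ T, ∀ y ∈ T, x ≠ y → 2 * (δ / 2) ≤ ‖x - y‖ := by
      simpa only [mul_div_cancel₀ δ two_ne_zero] using hsep
    have hglobal := T.card_mul_pow_le_of_norm_eq_one (by positivity) (by linarith) hsep' hT1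
    have hsub : (#{x ∈ T | ‖x - p‖ ≤ r} : ℝ) ≤ #T := by exact_mod_cast card_filter_le _ _
    rw [finrank_euclideanSpace_fin] at hglobal
    have hT : (#T : ℝ) * δ ^ 2 ≤ 24 + 2 * δ ^ 2 := by
      refine le_of_mul_le_mul_left ?_ hδ
      linarith
    nlinarith [mul_le_mul_of_nonneg_right hsub (sq_nonneg δ)]

theorem card_filter_geodesicDist_lt_le {Ξ : Finset E³} {ξ : E³} {τ : ℝ} (hτ : 0 < τ)
    (hτπ : τ ≤ π) (hΞ1 : ∀ x ∈ Ξ, ‖x‖ = 1)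
    (hsep : ∀ x ∈ Ξ, ∀ y ∈ Ξ, x ≠ y → τ ≤ geodesicDist x y) (hξ : ‖ξ‖ = 1) (j : ℕ) :
    (#{x ∈ Ξ | geodesicDist ξ x < 2 ^ j * τ} : ℝ) ≤ 360 * 4 ^ j := by
  have hchord : ∀ x ∈ Ξ, ∀ y ∈ Ξ, x ≠ y → 2 / π * τ ≤ ‖x - y‖ := fun x hx y hy hxy =>
    (mul_le_mul_of_nonneg_left (hsep x hx y hy hxy) (by positivity)).trans
      (two_div_pi_mul_geodesicDist_le_norm_sub (hΞ1 x hx) (hΞ1 y hy))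
  have hsub : {x ∈ Ξ | geodesicDist ξ x < 2 ^ j * τ} ⊆ {x ∈ Ξ | ‖x - ξ‖ ≤ 2 ^ j * τ} :=
    monotone_filter_right _ fun x hx hlt => by
      rw [norm_sub_rev]
      exact (norm_sub_le_geodesicDist hξ (hΞ1 x hx)).trans hlt.le
  have hcount := Ξ.card_filter_norm_sub_le_le hξ (by positivity)
    (by rw [div_mul_eq_mul_div, div_le_iff₀ pi_pos]; linarith) (by positivity) hchord hΞ1
    (r := 2 ^ j * τ)
  refine (Nat.cast_le.2 (card_le_card hsub)).trans (hcount.trans ?_)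
  have hratio : 2 ^ j * τ / (2 / π * τ) + 1 ≤ 3 * 2 ^ j := by
    have hj : (1 : ℝ) ≤ 2 ^ j := one_le_pow₀ one_le_two
    rw [show 2 ^ j * τ / (2 / π * τ) = π / 2 * 2 ^ j by field_simp]
    nlinarith [pi_lt_four]
  calc 40 * (2 ^ j * τ / (2 / π * τ) + 1) ^ 2 ≤ 40 * (3 * 2 ^ j) ^ 2 := by gcongr
    _ = 360 * 4 ^ j := by rw [mul_pow, ← pow_mul, mul_comm j, pow_mul]; ring

end Sphere

theorem Finset.sum_filter_lt_two_pow_mul_le {ι : Type*} (S : Finset ι) (ρ : ι → ℝ) {a : ℝ}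
    (ha : 0 ≤ a) (hρ : ∀ x ∈ S, a ≤ ρ x) {g : ℝ → ℝ} (hg : AntitoneOn g (Set.Ici a))
    (hg0 : ∀ t ∈ Set.Ici a, 0 ≤ g t) (J : ℕ) :
    ∑ x ∈ S with ρ x < 2 ^ J * a, g (ρ x) ≤
      ∑ j ∈ range J, #{x ∈ S | ρ x < 2 ^ (j + 1) * a} * g (2 ^ j * a) := by
  induction J with
  | zero =>
    rw [filter_false_of_mem fun x hx => by simpa using hρ x hx]
    simp
  | succ J ih =>
    have hJ : a ≤ 2 ^ J * a := le_mul_of_one_le_left ha (one_le_pow₀ one_le_two)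
    rw [sum_range_succ, ← sum_filter_add_sum_filter_not _ (fun x => ρ x < 2 ^ J * a),
      filter_filter, filter_filter]
    refine add_le_add (le_of_eq_of_le (sum_congr (filter_congr fun x _ => ?_) fun _ _ => rfl) ih) ?_
    · exact and_iff_right_of_imp fun h => h.trans_le
        (mul_le_mul_of_nonneg_right (pow_le_pow_right₀ one_le_two J.le_succ) ha)
    · calc ∑ x ∈ S with ρ x < 2 ^ (J + 1) * a ∧ ¬ρ x < 2 ^ J * a, g (ρ x)
          ≤ #{x ∈ S | ρ x < 2 ^ (J + 1) * a ∧ ¬ρ x < 2 ^ J * a} * g (2 ^ J * a) := by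
            rw [← nsmul_eq_mul]
            refine sum_le_card_nsmul _ _ _ fun x hx => ?_
            have hx := (mem_filter.1 hx).2.2
            exact hg hJ (hJ.trans (not_lt.1 hx)) (not_lt.1 hx)
        _ ≤ #{x ∈ S | ρ x < 2 ^ (J + 1) * a} * g (2 ^ J * a) := by
            refine mul_le_mul_of_nonneg_right ?_ (hg0 _ hJ)
            exact_mod_cast card_le_card (monotone_filter_right _ fun _ _ (h : _ ∧ _) => h.1)

theorem sum_range_four_pow_div_one_add_two_pow_mul_pow_le {k : ℕ} (hk : 3 ≤ k) {β : ℝ}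
    (hβ : 0 < β) (J : ℕ) :
    ∑ j ∈ range J, (4 : ℝ) ^ j / (1 + 2 ^ j * β) ^ k ≤ 2 / β ^ (k - 1) := by
  obtain ⟨m, rfl⟩ : ∃ m, k = m + 3 := ⟨k - 3, by omega⟩
  set f : ℕ → ℝ := fun j => 1 / (1 + 2 ^ j * β)
  have hterm : ∀ j,
      (4 : ℝ) ^ j / (1 + 2 ^ j * β) ^ (m + 3) ≤ 2 / β ^ (m + 2) * (f j - f (j + 1)) := by
    intro j
    set u : ℝ := 2 ^ j * β with hu_def
    have hu : β ≤ u := le_mul_of_one_le_left hβ.le (one_le_pow₀ one_le_two)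
    have h4 : (4 : ℝ) ^ j = u ^ 2 / β ^ 2 := by
      rw [hu_def, mul_pow, ← pow_mul, mul_comm j, pow_mul]; field_simp; norm_num
    have htel : f j - f (j + 1) = u / ((1 + u) * (1 + 2 * u)) := by
      have h2u : 2 ^ (j + 1) * β = 2 * u := by rw [hu_def, pow_succ]; ring
      change 1 / (1 + u) - 1 / (1 + 2 ^ (j + 1) * β) = _
      rw [h2u, div_sub_div _ _ (by linarith) (by linarith)]
      congr 1
      ring
    have hpoly : u * (1 + 2 * u) * β ^ m ≤ 2 * (1 + u) ^ 2 * (1 + u) ^ m :=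
      mul_le_mul (by nlinarith) (pow_le_pow_left₀ hβ.le (by linarith) m) (by positivity)
        (by positivity)
    rw [h4, htel, div_div, div_mul_div_comm, div_le_div_iff₀ (by positivity) (by positivity)]
    calc u ^ 2 * (β ^ (m + 2) * ((1 + u) * (1 + 2 * u)))
        = u * β ^ 2 * (1 + u) * (u * (1 + 2 * u) * β ^ m) := by ring
      _ ≤ u * β ^ 2 * (1 + u) * (2 * (1 + u) ^ 2 * (1 + u) ^ m) := by gcongr
      _ = 2 * u * (β ^ 2 * (1 + u) ^ (m + 3)) := by ring
  have hf0 : f 0 ≤ 1 := by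
    simp only [f, pow_zero, one_mul]
    exact div_le_one_of_le₀ (by linarith) (by positivity)
  have hfJ : 0 ≤ f J := by positivity
  calc ∑ j ∈ range J, (4 : ℝ) ^ j / (1 + 2 ^ j * β) ^ (m + 3)
      ≤ ∑ j ∈ range J, 2 / β ^ (m + 2) * (f j - f (j + 1)) := sum_le_sum fun j _ => hterm j
    _ = 2 / β ^ (m + 2) * (f 0 - f J) := by rw [← mul_sum, sum_range_sub']
    _ ≤ 2 / β ^ (m + 3 - 1) := by
      rw [show m + 3 - 1 = m + 2 by omega]
      exact mul_le_of_le_one_right (by positivity) (by linarith)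

theorem Finset.sum_one_div_one_add_mul_pow_le {ι : Type*} (S : Finset ι) (ρ : ι → ℝ)
    {a b K : ℝ} {k : ℕ} (hk : 3 ≤ k) (ha : 0 < a) (hb : 0 < b) (hρ : ∀ x ∈ S, a ≤ ρ x)
    (hcount : ∀ j : ℕ, (#{x ∈ S | ρ x < 2 ^ (j + 1) * a} : ℝ) ≤ K * 4 ^ j) :
    ∑ x ∈ S, 1 / (1 + b * ρ x) ^ k ≤ 2 * K / (a * b) ^ (k - 1) := by
  obtain ⟨J, hJ⟩ : ∃ J : ℕ, ∀ x ∈ S, ρ x < 2 ^ J * a :=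
    ((Filter.eventually_all_finset S).2 fun x _ =>
      ((tendsto_pow_atTop_atTop_of_one_lt one_lt_two).atTop_mul_const ha).eventually_gt_atTop
        (ρ x)).exists
  set g : ℝ → ℝ := fun t => 1 / (1 + b * t) ^ k
  have hg0 : ∀ t ∈ Set.Ici a, 0 ≤ g t := fun t ht => by
    have : 0 ≤ t := ha.le.trans ht
    positivity
  have hg : AntitoneOn g (Set.Ici a) := fun s hs t _ hst => by
    have : 0 ≤ s := ha.le.trans hs
    exact one_div_le_one_div_of_le (by positivity) (by gcongr)
  have hK : 0 ≤ K := by simpa using (Nat.cast_nonneg _).trans (hcount 0)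
  calc ∑ x ∈ S, g (ρ x) = ∑ x ∈ S with ρ x < 2 ^ J * a, g (ρ x) := by
        rw [filter_true_of_mem hJ]
    _ ≤ ∑ j ∈ range J, #{x ∈ S | ρ x < 2 ^ (j + 1) * a} * g (2 ^ j * a) :=
        S.sum_filter_lt_two_pow_mul_le ρ ha.le hρ hg hg0 J
    _ ≤ ∑ j ∈ range J, K * 4 ^ j * g (2 ^ j * a) := by
        refine sum_le_sum fun j _ => mul_le_mul_of_nonneg_right (hcount j) (hg0 _ ?_)
        exact le_mul_of_one_le_left ha.le (one_le_pow₀ one_le_two)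
    _ = K * ∑ j ∈ range J, (4 : ℝ) ^ j / (1 + 2 ^ j * (a * b)) ^ k := by
        rw [mul_sum]
        refine sum_congr rfl fun j _ => ?_
        simp only [g]
        ring
    _ ≤ K * (2 / (a * b) ^ (k - 1)) := by
        gcongr
        exact sum_range_four_pow_div_one_add_two_pow_mul_pow_le hk (by positivity) J
    _ = 2 * K / (a * b) ^ (k - 1) := by ring

theorem localized_kernel_sum_bound
    (k : ℕ) (hk : 3 ≤ k) (c : ℝ) (hc : 0 < c) :
    ∃ C : ℝ, 0 < C ∧
      ∀ (N : ℕ), 1 ≤ N → ∀ ν : ℝ, 0 < ν →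
      ∀ F : ℝ → ℝ, (∀ t : ℝ, 0 ≤ t → |F t| ≤ c / (1 + N * t)^k) →
      ∀ Ξ : Finset (EuclideanSpace ℝ (Fin 3)),
        (∀ x ∈ Ξ, ‖x‖ = 1) →
        (∀ x ∈ Ξ, ∀ y ∈ Ξ, x ≠ y → ν / N ≤ geodesicDist x y) →
        ∀ ξ0 ∈ Ξ, ∀ ξ : EuclideanSpace ℝ (Fin 3), ‖ξ‖ = 1 →
          geodesicDist ξ ξ0 ≤ ν / (2 * N) →
          ∑ ξm ∈ Ξ.erase ξ0, |F (geodesicDist ξ ξm)| ≤ C / ν^(k-1) := by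
  refine ⟨720 * 2 ^ (k - 1) * c, by positivity, ?_⟩
  intro N hN ν hν F hF Ξ hΞ1 hsep ξ0 hξ0 ξ hξ hξξ0
  have hN0 : (0 : ℝ) < N := by exact_mod_cast hN
  set τ := ν / N with hτ_def
  have hτ : 0 < τ := by positivity
  rcases le_or_gt τ π with hτπ | hτπ
  swap
  · rw [eq_empty_of_forall_notMem fun x hx => (hsep ξ0 hξ0 x (mem_erase.1 hx).2
      (mem_erase.1 hx).1.symm).not_gt (hτπ.trans_le' (arccos_le_pi _)), sum_empty]
    positivity
  have hfar : ∀ x ∈ Ξ.erase ξ0, τ / 2 ≤ geodesicDist ξ x := by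
    intro x hx
    obtain ⟨hxξ0, hx⟩ := mem_erase.1 hx
    have htri := geodesicDist_le_add (hΞ1 ξ0 hξ0) hξ (hΞ1 x hx)
    rw [geodesicDist_comm ξ0 ξ] at htri
    have hξξ0' : geodesicDist ξ ξ0 ≤ τ / 2 := by rwa [hτ_def, div_div, mul_comm]
    linarith [hsep ξ0 hξ0 x hx (Ne.symm hxξ0)]
  have hcount : ∀ j : ℕ,
      (#{x ∈ Ξ.erase ξ0 | geodesicDist ξ x < 2 ^ (j + 1) * (τ / 2)} : ℝ) ≤ 360 * 4 ^ j := by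
    intro j
    rw [show (2 : ℝ) ^ (j + 1) * (τ / 2) = 2 ^ j * τ by ring]
    exact (Nat.cast_le.2 (card_le_card (filter_subset_filter _ (erase_subset _ _)))).trans
      (card_filter_geodesicDist_lt_le hτ hτπ hΞ1 hsep hξ j)
  calc ∑ x ∈ Ξ.erase ξ0, |F (geodesicDist ξ x)|
      ≤ ∑ x ∈ Ξ.erase ξ0, c * (1 / (1 + N * geodesicDist ξ x) ^ k) :=
        sum_le_sum fun x _ => by rw [mul_one_div]; exact hF _ (arccos_nonneg _)
    _ = c * ∑ x ∈ Ξ.erase ξ0, 1 / (1 + N * geodesicDist ξ x) ^ k := (mul_sum ..).symm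
    _ ≤ c * (2 * 360 / (τ / 2 * N) ^ (k - 1)) := by
        gcongr
        exact (Ξ.erase ξ0).sum_one_div_one_add_mul_pow_le _ hk (by positivity) hN0 hfar hcount
    _ = 720 * 2 ^ (k - 1) * c / ν ^ (k - 1) := by
        rw [show τ / 2 * N = ν / 2 by rw [hτ_def]; field_simp, div_pow]
        field_simp
        ring
end
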